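/- arXiv:2603.24069 — 3 statements merged into one kernel-verified Lean document; each statement's English description precedes it below -/
import Mathlib

section
/- For a Pauli rotation unitary U(θ) = exp(-i(θ/2)σ), where σ is a Hermitian involution (σ² = I), the conjugation map 𝒰_θ(ρ) = U(θ)ρU(θ)† satisfies d𝒰_θ/dθ = (𝒰_{θ+π/2} - 𝒰_{θ-π/2})/2 as maps on matrices. -/
open Real Matrix

/-- The Pauli rotation unitary `U(θ) = exp(-i(θ/2)σ) = cos(θ/2)·I - i·sin(θ/2)·σ`. -/
noncomputable def pauliRot {D : ℕ} (σ : Matrix (Fin D) (Fin D) ℂ) (θ : ℝ) :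
    Matrix (Fin D) (Fin D) ℂ :=
  (Real.cos (θ / 2) : ℂ) • (1 : Matrix (Fin D) (Fin D) ℂ) -
    (Complex.I * (Real.sin (θ / 2) : ℂ)) • σ

lemma pauliRot_conj {D : ℕ} (σ : Matrix (Fin D) (Fin D) ℂ)
    (hherm : σᴴ = σ) (ρ : Matrix (Fin D) (Fin D) ℂ) (t : ℝ) :
    pauliRot σ t * ρ * (pauliRot σ t)ᴴ =
      ((Real.cos (t/2) : ℂ)^2) • ρ
      + ((Real.cos (t/2) : ℂ) * (Real.sin (t/2) : ℂ)) • (Complex.I • (ρ * σ - σ * ρ))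
      + ((Real.sin (t/2) : ℂ)^2) • (σ * ρ * σ) := by
  unfold pauliRot
  have hH : ((Real.cos (t / 2) : ℂ) • (1 : Matrix (Fin D) (Fin D) ℂ) -
      (Complex.I * (Real.sin (t / 2) : ℂ)) • σ)ᴴ =
      (Real.cos (t / 2) : ℂ) • (1 : Matrix (Fin D) (Fin D) ℂ) +
      (Complex.I * (Real.sin (t / 2) : ℂ)) • σ := by
    rw [conjTranspose_sub, conjTranspose_smul, conjTranspose_smul, conjTranspose_one, hherm]
    have h1 : star ((Real.cos (t/2) : ℂ)) = ((Real.cos (t/2) : ℂ)) := by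
      rw [Complex.star_def, Complex.conj_ofReal]
    have h2 : star (Complex.I * (Real.sin (t/2) : ℂ)) =
        -(Complex.I * (Real.sin (t/2) : ℂ)) := by
      rw [Complex.star_def, _root_.map_mul, Complex.conj_I, Complex.conj_ofReal]; ring
    rw [h1, h2, neg_smul, sub_neg_eq_add]
  rw [hH]
  simp only [sub_mul, mul_add, add_mul, mul_sub, Matrix.smul_mul, Matrix.mul_smul,
    Matrix.one_mul, Matrix.mul_one, smul_smul, smul_sub, Matrix.mul_assoc]
  match_scalars <;> (ring_nf; try (simp only [Complex.I_sq]; ring_nf))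

/-- The derivative of the conjugation channel `𝒰_θ(ρ) = U(θ)ρU(θ)†` satisfies
`d𝒰_θ/dθ = (𝒰_{θ+π/2} - 𝒰_{θ-π/2})/2` entrywise. -/
theorem pauliRot_channel_parameter_shift {D : ℕ} (σ : Matrix (Fin D) (Fin D) ℂ)
    (hherm : σᴴ = σ) (hinv : σ * σ = 1)
    (ρ : Matrix (Fin D) (Fin D) ℂ) (θ : ℝ) (i j : Fin D) :
    HasDerivAt (fun t : ℝ => (pauliRot σ t * ρ * (pauliRot σ t)ᴴ) i j)
      (((pauliRot σ (θ + π / 2) * ρ * (pauliRot σ (θ + π / 2))ᴴ -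
          pauliRot σ (θ - π / 2) * ρ * (pauliRot σ (θ - π / 2))ᴴ) i j) / 2) θ := by
  set A : ℂ := ρ i j with hA
  set B : ℂ := Complex.I * ((ρ * σ - σ * ρ) i j) with hB
  set C : ℂ := (σ * ρ * σ) i j with hC
  have hfun : ∀ t : ℝ, (pauliRot σ t * ρ * (pauliRot σ t)ᴴ) i j =
      (Real.cos (t/2) : ℂ)^2 * A + ((Real.cos (t/2) : ℂ) * (Real.sin (t/2) : ℂ)) * B +
      (Real.sin (t/2) : ℂ)^2 * C := by
    intro t
    rw [pauliRot_conj σ hherm ρ t]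
    simp [Matrix.add_apply, Matrix.smul_apply, smul_eq_mul, hA, hB, hC]
    try ring
  -- derivatives of the coordinate functions
  have hhalf : HasDerivAt (fun t : ℝ => t / 2) (1/2 : ℝ) θ := by
    simpa using (hasDerivAt_id θ).div_const 2
  have hc : HasDerivAt (fun t : ℝ => Real.cos (t/2)) (-Real.sin (θ/2) * (1/2)) θ :=
    by have := (Real.hasDerivAt_cos (θ/2)).comp θ hhalf; exact this
  have hs : HasDerivAt (fun t : ℝ => Real.sin (t/2)) (Real.cos (θ/2) * (1/2)) θ :=
    by have := (Real.hasDerivAt_sin (θ/2)).comp θ hhalf; exact this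
  have hco : HasDerivAt (fun t : ℝ => (Real.cos (t/2) : ℂ))
      ((-Real.sin (θ/2) * (1/2) : ℝ) : ℂ) θ := hc.ofReal_comp
  have hso : HasDerivAt (fun t : ℝ => (Real.sin (t/2) : ℂ))
      ((Real.cos (θ/2) * (1/2) : ℝ) : ℂ) θ := hs.ofReal_comp
  have hF := (((hco.mul hco).mul_const A).add ((hco.mul hso).mul_const B)).add
    ((hso.mul hso).mul_const C)
  have heq : (fun t : ℝ => (pauliRot σ t * ρ * (pauliRot σ t)ᴴ) i j) =
      (fun t : ℝ => ((Real.cos (t/2) : ℂ) * (Real.cos (t/2) : ℂ)) * A +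
        ((Real.cos (t/2) : ℂ) * (Real.sin (t/2) : ℂ)) * B + ((Real.sin (t/2) : ℂ) * (Real.sin (t/2) : ℂ)) * C) := by
    funext t; rw [hfun t]; ring
  rw [heq, Matrix.sub_apply, hfun (θ + π/2), hfun (θ - π/2)]
  -- real trig identities
  have h2 : Real.sqrt 2 * Real.sqrt 2 = 2 := Real.mul_self_sqrt (by norm_num)
  have e1 : (θ + π/2)/2 = θ/2 + π/4 := by ring
  have e2 : (θ - π/2)/2 = θ/2 - π/4 := by ring
  have hAr : Real.cos ((θ + π/2)/2)^2 - Real.cos ((θ - π/2)/2)^2 =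
      -2 * Real.cos (θ/2) * Real.sin (θ/2) := by
    rw [e1, e2, Real.cos_add, Real.cos_sub, Real.cos_pi_div_four, Real.sin_pi_div_four]
    linear_combination (-(Real.cos (θ/2) * Real.sin (θ/2))) * h2
  have hBr : Real.cos ((θ + π/2)/2) * Real.sin ((θ + π/2)/2) -
      Real.cos ((θ - π/2)/2) * Real.sin ((θ - π/2)/2) =
      Real.cos (θ/2)^2 - Real.sin (θ/2)^2 := by
    rw [e1, e2, Real.cos_add, Real.cos_sub, Real.sin_add, Real.sin_sub,
      Real.cos_pi_div_four, Real.sin_pi_div_four]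
    linear_combination ((Real.cos (θ/2)^2 - Real.sin (θ/2)^2)/2) * h2
  have hCr : Real.sin ((θ + π/2)/2)^2 - Real.sin ((θ - π/2)/2)^2 =
      2 * Real.cos (θ/2) * Real.sin (θ/2) := by
    rw [e1, e2, Real.sin_add, Real.sin_sub, Real.cos_pi_div_four, Real.sin_pi_div_four]
    linear_combination (Real.cos (θ/2) * Real.sin (θ/2)) * h2
  have hAc : ((Real.cos ((θ + π/2)/2) : ℂ))^2 - ((Real.cos ((θ - π/2)/2) : ℂ))^2 =
      -2 * (Real.cos (θ/2) : ℂ) * (Real.sin (θ/2) : ℂ) := by exact_mod_cast hAr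
  have hBc : (Real.cos ((θ + π/2)/2) : ℂ) * (Real.sin ((θ + π/2)/2) : ℂ) -
      (Real.cos ((θ - π/2)/2) : ℂ) * (Real.sin ((θ - π/2)/2) : ℂ) =
      (Real.cos (θ/2) : ℂ)^2 - (Real.sin (θ/2) : ℂ)^2 := by exact_mod_cast hBr
  have hCc : ((Real.sin ((θ + π/2)/2) : ℂ))^2 - ((Real.sin ((θ - π/2)/2) : ℂ))^2 =
      2 * (Real.cos (θ/2) : ℂ) * (Real.sin (θ/2) : ℂ) := by exact_mod_cast hCr
  refine hF.congr_deriv ?_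
  push_cast at hAc hBc hCc ⊢
  linear_combination (-A/2) * hAc + (-B/2) * hBc + (-C/2) * hCc
end

section
/- Let f(θ) = tr[O · U(θ) ρ U(θ)†] where U(θ) = exp(-i(θ/2)σ) with σ a Hermitian involution. Then f'(θ) = (f(θ + π/2) - f(θ - π/2))/2 (the single-gate parameter shift rule). -/
open Real Matrix

lemma psr_key {D : ℕ} (σ : Matrix (Fin D) (Fin D) ℂ)
    (hherm : σᴴ = σ) (O ρ : Matrix (Fin D) (Fin D) ℂ) (t : ℝ) :
    (O * (pauliRot σ t * ρ * (pauliRot σ t)ᴴ)).trace =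
      ((O * ρ).trace + (O * (σ * ρ * σ)).trace) / 2
      + (Real.cos t : ℂ) * (((O * ρ).trace - (O * (σ * ρ * σ)).trace) / 2)
      + (Real.sin t : ℂ) *
          (Complex.I * ((O * (ρ * σ)).trace - (O * (σ * ρ)).trace) / 2) := by
  have e2 : 2 * (t / 2) = t := by ring
  have hc2 : (Real.cos (t/2) : ℂ) * (Real.cos (t/2) : ℂ) = (1 + (Real.cos t : ℂ)) / 2 := by
    have h := Real.cos_sq (t/2); rw [e2] at h
    have : Real.cos (t/2) * Real.cos (t/2) = (1 + Real.cos t) / 2 := by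
      rw [← pow_two]; rw [h]; ring
    exact_mod_cast this
  have hs2 : (Real.sin (t/2) : ℂ) * (Real.sin (t/2) : ℂ) = (1 - (Real.cos t : ℂ)) / 2 := by
    have h := Real.sin_sq (t/2)
    have h2 := Real.cos_sq (t/2); rw [e2] at h2
    have : Real.sin (t/2) * Real.sin (t/2) = (1 - Real.cos t) / 2 := by
      rw [← pow_two, h, h2]; ring
    exact_mod_cast this
  have hcs : (Real.cos (t/2) : ℂ) * (Real.sin (t/2) : ℂ) = (Real.sin t : ℂ) / 2 := by
    have h := Real.sin_two_mul (t/2); rw [e2] at h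
    have : Real.cos (t/2) * Real.sin (t/2) = Real.sin t / 2 := by rw [h]; ring
    exact_mod_cast this
  simp only [pauliRot, conjTranspose_sub, conjTranspose_smul, conjTranspose_one, hherm,
    Matrix.sub_mul, Matrix.mul_sub, Matrix.smul_mul, Matrix.mul_smul, smul_smul,
    Matrix.one_mul, Matrix.mul_one, trace_sub, trace_smul, smul_eq_mul,
    star_mul', Complex.star_def, Complex.conj_I, Complex.conj_ofReal,
    Matrix.mul_assoc]
  linear_combination (O*ρ).trace * hc2 + (O*(σ*(ρ*σ))).trace * hs2
    - (O*(σ*(ρ*σ))).trace * ((Real.sin (t/2) : ℂ) * (Real.sin (t/2) : ℂ)) * Complex.I_sq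
    + Complex.I * ((O*(ρ*σ)).trace - (O*(σ*ρ)).trace) * hcs

/-- Single-gate parameter shift rule: for `f(θ) = tr[O U(θ) ρ U(θ)†]`,
`f'(θ) = (f(θ + π/2) - f(θ - π/2))/2`. -/
theorem single_gate_parameter_shift {D : ℕ} (σ : Matrix (Fin D) (Fin D) ℂ)
    (hherm : σᴴ = σ) (hinv : σ * σ = 1)
    (O ρ : Matrix (Fin D) (Fin D) ℂ) (θ : ℝ) :
    HasDerivAt (fun t : ℝ => (O * (pauliRot σ t * ρ * (pauliRot σ t)ᴴ)).trace)
      (((O * (pauliRot σ (θ + π / 2) * ρ * (pauliRot σ (θ + π / 2))ᴴ)).trace -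
        (O * (pauliRot σ (θ - π / 2) * ρ * (pauliRot σ (θ - π / 2))ᴴ)).trace) / 2) θ := by
  have key := psr_key σ hherm O ρ
  set A := ((O * ρ).trace + (O * (σ * ρ * σ)).trace) / 2 with hA
  set B := ((O * ρ).trace - (O * (σ * ρ * σ)).trace) / 2 with hB
  set C := Complex.I * ((O * (ρ * σ)).trace - (O * (σ * ρ)).trace) / 2 with hC
  have heq : (fun t : ℝ => (O * (pauliRot σ t * ρ * (pauliRot σ t)ᴴ)).trace)
      = fun t : ℝ => A + (Real.cos t : ℂ) * B + (Real.sin t : ℂ) * C := funext key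
  rw [heq, key (θ + π / 2), key (θ - π / 2)]
  have hc : HasDerivAt (fun t : ℝ => ((Real.cos t : ℝ) : ℂ)) ((-Real.sin θ : ℝ) : ℂ) θ :=
    (Real.hasDerivAt_cos θ).ofReal_comp
  have hs : HasDerivAt (fun t : ℝ => ((Real.sin t : ℝ) : ℂ)) ((Real.cos θ : ℝ) : ℂ) θ :=
    (Real.hasDerivAt_sin θ).ofReal_comp
  have hderiv : HasDerivAt (fun t : ℝ => A + (Real.cos t : ℂ) * B + (Real.sin t : ℂ) * C)
      (((-Real.sin θ : ℝ) : ℂ) * B + ((Real.cos θ : ℝ) : ℂ) * C) θ :=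
    ((hc.mul_const B).const_add A).add (hs.mul_const C)
  convert hderiv using 1
  rw [Real.cos_add_pi_div_two, Real.sin_add_pi_div_two, Real.cos_sub_pi_div_two,
    Real.sin_sub_pi_div_two]
  push_cast
  ring
end

section
/- Parameter shift rule for repeated parameters: suppose f(θ) = tr[O · (𝒲_n ∘ 𝒰_θ ∘ 𝒲_{n-1} ∘ 𝒰_θ ∘ ⋯ ∘ 𝒰_θ ∘ 𝒲_0)(ρ)], where each 𝒰_θ is conjugation by the same Pauli rotation exp(-i(θ/2)σ) appearing n times, and 𝒲_i are fixed linear maps. Let f_{i,s} denote the same expression with the i-th occurrence of θ replaced by θ + sπ/2 (s ∈ {−1,+1}). Then f'(θ) = Σ_{i=0}^{n-1} (f_{i,+1} − f_{i,−1})/2. -/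
open Real Matrix

/-- The conjugation channel `𝒰_θ(ρ) = U(θ) ρ U(θ)†`. -/
noncomputable def pauliRotChannel {D : ℕ} (σ : Matrix (Fin D) (Fin D) ℂ) (θ : ℝ)
    (ρ : Matrix (Fin D) (Fin D) ℂ) : Matrix (Fin D) (Fin D) ℂ :=
  pauliRot σ θ * ρ * (pauliRot σ θ)ᴴ

/-- The circuit `𝒲_n ∘ 𝒰_{θ_{n-1}} ∘ 𝒲_{n-1} ∘ ⋯ ∘ 𝒰_{θ_0} ∘ 𝒲_0` with `n` Pauli rotation
channels (with angles `θs`) interleaved with fixed linear maps `W`. -/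
noncomputable def rotChain {D : ℕ} (σ : Matrix (Fin D) (Fin D) ℂ) :
    (n : ℕ) →
    (Fin (n + 1) → Matrix (Fin D) (Fin D) ℂ →ₗ[ℂ] Matrix (Fin D) (Fin D) ℂ) →
    (Fin n → ℝ) → Matrix (Fin D) (Fin D) ℂ → Matrix (Fin D) (Fin D) ℂ
  | 0, W, _, ρ => W 0 ρ
  | n + 1, W, θs, ρ =>
      W (Fin.last (n + 1)) (pauliRotChannel σ (θs (Fin.last n))
        (rotChain σ n (fun i => W i.castSucc) (fun i => θs i.castSucc) ρ))

/-!
The rotation `U(θ) = cos(θ/2) I - i sin(θ/2) σ` satisfies `U'(θ) = U(θ + π)/2` and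
`U(θ ± π/2) = (U(θ) ± U(θ + π))/√2`. Hence, with `V = U(θ + π)`, the derivative
`(V X U* + U X V*)/2` of `𝒰_θ(X) = U X U*` equals `(𝒰_{θ+π/2}(X) - 𝒰_{θ-π/2}(X))/2`: the shift rule
for a single occurrence of `θ`. Differentiating the circuit with all angles tied to `t`, the product
rule and linearity of the remaining layers turn the derivative into the sum over occurrences of these
single-occurrence shift rules (induction on the number of rotations).
-/

-- Any norm on matrices would do; the operator norm makes them a normed algebra.
open scoped Matrix.Norms.Operator

theorem HasDerivAt.linearMap_comp {𝕜 𝕜' E F : Type*} [NontriviallyNormedField 𝕜]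
    [NontriviallyNormedField 𝕜'] [CompleteSpace 𝕜'] [NormedAlgebra 𝕜 𝕜']
    [NormedAddCommGroup E] [NormedSpace 𝕜' E] [NormedSpace 𝕜 E] [IsScalarTower 𝕜 𝕜' E]
    [FiniteDimensional 𝕜' E]
    [NormedAddCommGroup F] [NormedSpace 𝕜' F] [NormedSpace 𝕜 F] [IsScalarTower 𝕜 𝕜' F]
    {g : 𝕜 → E} {g' : E} {x : 𝕜} (h : HasDerivAt g g' x) (L : E →ₗ[𝕜'] F) :
    HasDerivAt (fun t => L (g t)) (L g') x :=
  ((LinearMap.toContinuousLinearMap L).restrictScalars 𝕜).hasFDerivAt.comp_hasDerivAt x h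

section
variable {D : ℕ} (σ : Matrix (Fin D) (Fin D) ℂ)

theorem hasDerivAt_pauliRot (θ : ℝ) :
    HasDerivAt (pauliRot σ) ((2 : ℝ)⁻¹ • pauliRot σ (θ + π)) θ := by
  have hhalf : HasDerivAt (fun t : ℝ => t / 2) (1 / 2) θ := (hasDerivAt_id θ).div_const 2
  have hcos := (hhalf.cos.ofReal_comp).smul_const (1 : Matrix (Fin D) (Fin D) ℂ)
  have hsin := ((hhalf.sin.ofReal_comp).const_mul Complex.I).smul_const σ
  refine (hcos.sub hsin).congr_deriv ?_
  simp only [pauliRot]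
  rw [show (θ + π) / 2 = θ / 2 + π / 2 by ring, Real.cos_add_pi_div_two, Real.sin_add_pi_div_two]
  match_scalars <;> ring

theorem pauliRot_add_pi_div_two (θ : ℝ) :
    pauliRot σ (θ + π / 2) = (√2)⁻¹ • (pauliRot σ θ + pauliRot σ (θ + π)) := by
  have h : √2 / 2 = (√2)⁻¹ := by rw [Real.sqrt_div_self', one_div]
  simp only [pauliRot]
  rw [show (θ + π / 2) / 2 = θ / 2 + π / 4 by ring,
    show (θ + π) / 2 = θ / 2 + π / 2 by ring, Real.cos_add_pi_div_two, Real.sin_add_pi_div_two,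
    Real.cos_add, Real.sin_add, Real.cos_pi_div_four, Real.sin_pi_div_four, h]
  match_scalars <;> push_cast [Complex.coe_algebraMap] <;> ring

theorem pauliRot_sub_pi_div_two (θ : ℝ) :
    pauliRot σ (θ - π / 2) = (√2)⁻¹ • (pauliRot σ θ - pauliRot σ (θ + π)) := by
  have h : √2 / 2 = (√2)⁻¹ := by rw [Real.sqrt_div_self', one_div]
  simp only [pauliRot]
  rw [show (θ - π / 2) / 2 = θ / 2 - π / 4 by ring,
    show (θ + π) / 2 = θ / 2 + π / 2 by ring, Real.cos_add_pi_div_two, Real.sin_add_pi_div_two,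
    Real.cos_sub, Real.sin_sub, Real.cos_pi_div_four, Real.sin_pi_div_four, h]
  match_scalars <;> push_cast [Complex.coe_algebraMap] <;> ring

theorem pauliRotChannel_add_pi_div_two_sub_sub_pi_div_two (θ : ℝ) (X : Matrix (Fin D) (Fin D) ℂ) :
    pauliRotChannel σ (θ + π / 2) X - pauliRotChannel σ (θ - π / 2) X =
      pauliRot σ (θ + π) * X * (pauliRot σ θ)ᴴ + pauliRot σ θ * X * (pauliRot σ (θ + π))ᴴ := by
  have h : (√2)⁻¹ * (√2)⁻¹ = (2 : ℝ)⁻¹ := by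
    rw [← mul_inv, Real.mul_self_sqrt zero_le_two]
  simp only [pauliRotChannel, pauliRot_add_pi_div_two, pauliRot_sub_pi_div_two,
    conjTranspose_smul, conjTranspose_add, conjTranspose_sub, star_trivial]
  simp only [smul_mul_assoc, mul_smul_comm, smul_smul, h]
  simp only [add_mul, mul_add, sub_mul, mul_sub]
  module

theorem pauliRotChannel_eq_mulLeftRight (θ : ℝ) :
    pauliRotChannel σ θ = LinearMap.mulLeftRight ℂ (pauliRot σ θ, (pauliRot σ θ)ᴴ) := rfl

theorem conjTranspose_pauliRot (θ : ℝ) : (pauliRot σ θ)ᴴ = pauliRot (-σᴴ) θ := by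
  simp only [pauliRot, conjTranspose_sub, conjTranspose_smul, conjTranspose_one, Complex.star_def,
    map_mul, Complex.conj_ofReal, Complex.conj_I]
  module

theorem HasDerivAt.pauliRotChannel {G : ℝ → Matrix (Fin D) (Fin D) ℂ}
    {G' : Matrix (Fin D) (Fin D) ℂ} {θ : ℝ} (hG : HasDerivAt G G' θ) :
    HasDerivAt (fun t => pauliRotChannel σ t (G t))
      ((2 : ℝ)⁻¹ • (pauliRotChannel σ (θ + π / 2) (G θ) - pauliRotChannel σ (θ - π / 2) (G θ))
        + pauliRotChannel σ θ G') θ := by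
  rw [pauliRotChannel_add_pi_div_two_sub_sub_pi_div_two]
  simp only [_root_.pauliRotChannel, conjTranspose_pauliRot]
  refine (((hasDerivAt_pauliRot σ θ).fun_mul hG).fun_mul
    (hasDerivAt_pauliRot (-σᴴ) θ)).congr_deriv ?_
  simp only [add_mul, smul_mul_assoc, mul_smul_comm]
  module

variable {n : ℕ} (W : Fin (n + 2) → Matrix (Fin D) (Fin D) ℂ →ₗ[ℂ] Matrix (Fin D) (Fin D) ℂ)
  (θs : Fin (n + 1) → ℝ) (v : ℝ) (ρ : Matrix (Fin D) (Fin D) ℂ)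

theorem rotChain_update_castSucc (i : Fin n) :
    rotChain σ (n + 1) W (Function.update θs i.castSucc v) ρ =
      W (Fin.last (n + 1)) (pauliRotChannel σ (θs (Fin.last n))
        (rotChain σ n (fun j => W j.castSucc) (Function.update (fun j => θs j.castSucc) i v) ρ)) := by
  rw [rotChain, Function.update_of_ne (Fin.castSucc_lt_last i).ne']
  congr
  exact Function.update_comp_eq_of_injective θs (Fin.castSucc_injective n) i v

theorem rotChain_update_last :
    rotChain σ (n + 1) W (Function.update θs (Fin.last n) v) ρ =
      W (Fin.last (n + 1)) (pauliRotChannel σ v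
        (rotChain σ n (fun j => W j.castSucc) (fun j => θs j.castSucc) ρ)) := by
  rw [rotChain, Function.update_self]
  congr
  exact Function.update_comp_eq_of_forall_ne θs v (fun j => (Fin.castSucc_lt_last j).ne)

end

theorem hasDerivAt_rotChain_const {D : ℕ} (σ : Matrix (Fin D) (Fin D) ℂ) (n : ℕ)
    (W : Fin (n + 1) → Matrix (Fin D) (Fin D) ℂ →ₗ[ℂ] Matrix (Fin D) (Fin D) ℂ)
    (ρ : Matrix (Fin D) (Fin D) ℂ) (θ : ℝ) :
    HasDerivAt (fun t => rotChain σ n W (fun _ => t) ρ)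
      (∑ i : Fin n, (2 : ℝ)⁻¹ •
        (rotChain σ n W (Function.update (fun _ => θ) i (θ + π / 2)) ρ -
          rotChain σ n W (Function.update (fun _ => θ) i (θ - π / 2)) ρ)) θ := by
  induction n with
  | zero =>
    rw [Finset.univ_eq_empty, Finset.sum_empty]
    exact hasDerivAt_const θ (W 0 ρ)
  | succ n ih =>
    refine (((ih (fun j => W j.castSucc)).pauliRotChannel σ).linearMap_comp
      (W (Fin.last (n + 1)))).congr_deriv ?_
    rw [Fin.sum_univ_castSucc]
    simp only [rotChain_update_castSucc, rotChain_update_last, pauliRotChannel_eq_mulLeftRight, map_add, map_sum, map_sub,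
      LinearMap.map_smul_of_tower]
    exact add_comm _ _

theorem repeated_parameter_shift_general {D : ℕ} (σ : Matrix (Fin D) (Fin D) ℂ) (n : ℕ)
    (W : Fin (n + 1) → Matrix (Fin D) (Fin D) ℂ →ₗ[ℂ] Matrix (Fin D) (Fin D) ℂ)
    (O ρ : Matrix (Fin D) (Fin D) ℂ) (θ : ℝ) :
    HasDerivAt (fun t : ℝ => (O * rotChain σ n W (fun _ => t) ρ).trace)
      (∑ i : Fin n,
        ((O * rotChain σ n W (Function.update (fun _ => θ) i (θ + π / 2)) ρ).trace -
         (O * rotChain σ n W (Function.update (fun _ => θ) i (θ - π / 2)) ρ).trace) / 2)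
      θ := by
  refine ((hasDerivAt_rotChain_const σ n W ρ θ).linearMap_comp
    (traceLinearMap (Fin D) ℂ ℂ ∘ₗ LinearMap.mulLeft ℂ O)).congr_deriv ?_
  simp only [map_sum, map_sub, LinearMap.map_smul_of_tower, LinearMap.comp_apply,
    traceLinearMap_apply, LinearMap.mulLeft_apply, Complex.real_smul]
  push_cast
  simp only [div_eq_inv_mul]

/-- Parameter shift rule for repeated parameters: if the same Pauli rotation angle `θ`
appears in all `n` occurrences, then `f'(θ) = Σ_{i} (f_{i,+1} − f_{i,−1})/2` where
`f_{i,s}` shifts only the `i`-th occurrence by `sπ/2`. -/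
theorem repeated_parameter_shift {D : ℕ} (σ : Matrix (Fin D) (Fin D) ℂ)
    (hherm : σᴴ = σ) (hinv : σ * σ = 1) (n : ℕ)
    (W : Fin (n + 1) → Matrix (Fin D) (Fin D) ℂ →ₗ[ℂ] Matrix (Fin D) (Fin D) ℂ)
    (O ρ : Matrix (Fin D) (Fin D) ℂ) (θ : ℝ) :
    HasDerivAt (fun t : ℝ => (O * rotChain σ n W (fun _ => t) ρ).trace)
      (∑ i : Fin n,
        ((O * rotChain σ n W (Function.update (fun _ => θ) i (θ + π / 2)) ρ).trace -
         (O * rotChain σ n W (Function.update (fun _ => θ) i (θ - π / 2)) ρ).trace) / 2)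
      θ :=
  repeated_parameter_shift_general σ n W O ρ θ
end
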